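/- Let b, H, κ, L be real numbers with b > 0 and H > 0, let σ = 2, and set β = 2(H + b)/b³ + 1/(H + b)². Define on the set D = {(x,y) ∈ ℝ² : y + b > 0} the viscosity ν(x,y) = (y + b)², the velocity field u(x,y) = ( (κ/2)(1 − 2(y + b)/(β b³) − 1/(β (y + b)²)), 0 ), and the pressure p(x,y) = κ(L/2 − x). Then on D the pair (u, p) satisfies the generalised Stokes equations with zero forcing: σu − ∇·(2ν∇^s u) + ∇p = 0 and ∇·u = 0. -/

import Mathlib

/-- Partial derivative `∂ⱼ f` of a scalar field `f : ℝ² → ℝ`. -/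
noncomputable def pd (j : Fin 2) (f : (Fin 2 → ℝ) → ℝ) (x : Fin 2 → ℝ) : ℝ :=
  fderiv ℝ f x (Pi.single j 1)

lemma pd_congr {f g : (Fin 2 → ℝ) → ℝ} {z : Fin 2 → ℝ}
    (h : f =ᶠ[nhds z] g) (j : Fin 2) : pd j f z = pd j g z := by
  unfold pd; rw [h.fderiv_eq]

lemma pd_const (j : Fin 2) (c : ℝ) (z : Fin 2 → ℝ) : pd j (fun _ => c) z = 0 := by
  unfold pd; simp

lemma pd_comp (k j : Fin 2) {F : ℝ → ℝ} {F' : ℝ} {z : Fin 2 → ℝ}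
    (hF : HasDerivAt F F' (z k)) :
    pd j (fun w => F (w k)) z = (Pi.single j (1:ℝ) : Fin 2 → ℝ) k * F' := by
  have h1 : HasFDerivAt (fun w : Fin 2 → ℝ => w k)
      (ContinuousLinearMap.proj k : (Fin 2 → ℝ) →L[ℝ] ℝ) z :=
    hasFDerivAt_apply k z
  have h2 : HasFDerivAt (fun w : Fin 2 → ℝ => F (w k))
      ((ContinuousLinearMap.smulRight (1 : ℝ →L[ℝ] ℝ) F').comp
        (ContinuousLinearMap.proj k)) z := hF.hasFDerivAt.comp z h1
  unfold pd
  rw [h2.fderiv]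
  simp [smul_eq_mul, mul_comm]

/-- The generalised Stokes channel-flow solution: with `σ = 2`,
`β = 2(H + b)/b³ + 1/(H + b)²`, viscosity `ν(x,y) = (y + b)²`, velocity
`u = ((κ/2)(1 − 2(y + b)/(β b³) − 1/(β (y + b)²)), 0)` and pressure
`p = κ(L/2 − x)`, the pair `(u, p)` satisfies `σu − ∇·(2ν∇ˢu) + ∇p = 0` and
`∇·u = 0` on `D = {(x,y) : y + b > 0}`. -/
theorem generalised_stokes_channel_solution
    (b H κ L σ β : ℝ) (hb : 0 < b) (hH : 0 < H)
    (hσ : σ = 2) (hβ : β = 2 * (H + b) / b ^ 3 + 1 / (H + b) ^ 2)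
    (ν : (Fin 2 → ℝ) → ℝ) (hν : ν = fun z => (z 1 + b) ^ 2)
    (u : (Fin 2 → ℝ) → Fin 2 → ℝ)
    (hu : u = fun z =>
      ![κ / 2 * (1 - 2 * (z 1 + b) / (β * b ^ 3) - 1 / (β * (z 1 + b) ^ 2)), 0])
    (p : (Fin 2 → ℝ) → ℝ) (hp : p = fun z => κ * (L / 2 - z 0)) :
    ∀ z : Fin 2 → ℝ, z 1 + b > 0 →
      (∀ i : Fin 2,
        σ * u z i
          - (∑ j, pd j (fun y => ν y * (pd j (fun w => u w i) y + pd i (fun w => u w j) y)) z)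
          + pd i p z = 0)
      ∧ ∑ j, pd j (fun w => u w j) z = 0 := by
  have hβpos : 0 < β := by
    have h1 : 0 < H + b := by linarith
    rw [hβ]; positivity
  have hβ0 : β ≠ 0 := ne_of_gt hβpos
  have hb0 : b ≠ 0 := ne_of_gt hb
  subst hσ hν hu hp
  intro z hz
  have hzb : (0:ℝ) < z 1 + b := hz
  have hzb0 : z 1 + b ≠ 0 := ne_of_gt hzb
  have hSopen : IsOpen {w : Fin 2 → ℝ | 0 < w 1 + b} :=
    isOpen_lt continuous_const ((continuous_apply 1).add continuous_const)
  have hS : {w : Fin 2 → ℝ | 0 < w 1 + b} ∈ nhds z := hSopen.mem_nhds hzb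
  -- derivative of the velocity profile
  have hF0 : ∀ s : ℝ, 0 < s + b →
      HasDerivAt (fun x : ℝ => κ / 2 * (1 - 2 * (x + b) / (β * b ^ 3) - 1 / (β * (x + b) ^ 2)))
        (κ / 2 * (-(2 / (β * b ^ 3)) + 2 / (β * (s + b) ^ 3))) s := by
    intro s hs
    have hsb : s + b ≠ 0 := ne_of_gt hs
    have h1 : HasDerivAt (fun x : ℝ => x + b) 1 s := (hasDerivAt_id s).add_const b
    have h2 : HasDerivAt (fun x : ℝ => β * (x + b) ^ 2) (β * (↑2 * (s + b) ^ 1 * 1)) s :=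
      (h1.pow 2).const_mul β
    have h3 := h2.inv (mul_ne_zero hβ0 (pow_ne_zero 2 hsb))
    have h3' : HasDerivAt (fun x : ℝ => 1 / (β * (x + b) ^ 2))
        (-(β * (↑2 * (s + b) ^ 1 * 1)) / (β * (s + b) ^ 2) ^ 2) s := by
      simpa only [one_div, Pi.inv_def] using h3
    have hA : HasDerivAt (fun x : ℝ => 2 * (x + b)) (2 * 1) s := h1.const_mul 2
    have hB := (hA.div_const (β * b ^ 3)).const_sub 1
    have hC := hB.sub h3'
    have hD := hC.const_mul (κ / 2)
    convert hD using 1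
    · rfl
    · rfl
    · rfl
    field_simp
    ring
  -- derivative of ν times the profile derivative
  have hG : ∀ s : ℝ, 0 < s + b →
      HasDerivAt (fun x : ℝ => (x + b) ^ 2 * (κ / 2 * (-(2 / (β * b ^ 3)) + 2 / (β * (x + b) ^ 3))))
        (-(2 * κ * (s + b) / (β * b ^ 3)) - κ / (β * (s + b) ^ 2)) s := by
    intro s hs
    have hsb : s + b ≠ 0 := ne_of_gt hs
    have h1 : HasDerivAt (fun x : ℝ => x + b) 1 s := (hasDerivAt_id s).add_const b
    have h4 : HasDerivAt (fun x : ℝ => β * (x + b) ^ 3) (β * (↑3 * (s + b) ^ 2 * 1)) s :=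
      (h1.pow 3).const_mul β
    have h5 := (hasDerivAt_const s (2:ℝ)).div h4 (mul_ne_zero hβ0 (pow_ne_zero 3 hsb))
    have h6 := h5.const_add (-(2 / (β * b ^ 3)))
    have h7 := h6.const_mul (κ / 2)
    have h8 := (h1.pow 2).mul h7
    convert h8 using 1
    · rfl
    · rfl
    · rfl
    simp only [Pi.div_apply, Pi.pow_apply]
    field_simp
    ring
  -- pd facts
  have P1 : ∀ y ∈ {w : Fin 2 → ℝ | 0 < w 1 + b},
      pd 0 (fun w : Fin 2 → ℝ =>
        κ / 2 * (1 - 2 * (w 1 + b) / (β * b ^ 3) - 1 / (β * (w 1 + b) ^ 2))) y = 0 := by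
    intro y hy
    have := pd_comp 1 0 (hF0 (y 1) hy)
    simpa using this
  have P2 : ∀ y ∈ {w : Fin 2 → ℝ | 0 < w 1 + b},
      pd 1 (fun w : Fin 2 → ℝ =>
        κ / 2 * (1 - 2 * (w 1 + b) / (β * b ^ 3) - 1 / (β * (w 1 + b) ^ 2))) y
        = κ / 2 * (-(2 / (β * b ^ 3)) + 2 / (β * (y 1 + b) ^ 3)) := by
    intro y hy
    have := pd_comp 1 1 (hF0 (y 1) hy)
    simpa using this
  have P4 : pd 0 (fun w : Fin 2 → ℝ => κ * (L / 2 - w 0)) z = -κ := by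
    have hP : HasDerivAt (fun x : ℝ => κ * (L / 2 - x)) (κ * -1) (z 0) :=
      ((hasDerivAt_id (z 0)).const_sub (L / 2)).const_mul κ
    have := pd_comp 0 0 hP
    simpa using this
  have P5 : pd 1 (fun w : Fin 2 → ℝ => κ * (L / 2 - w 0)) z = 0 := by
    have hP : HasDerivAt (fun x : ℝ => κ * (L / 2 - x)) (κ * -1) (z 0) :=
      ((hasDerivAt_id (z 0)).const_sub (L / 2)).const_mul κ
    have := pd_comp 0 1 hP
    simpa using this
  simp only [Matrix.cons_val_zero, Matrix.cons_val_one, Matrix.head_cons, Fin.sum_univ_two,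
    Fin.forall_fin_two]
  refine ⟨⟨?_, ?_⟩, ?_⟩
  · -- first momentum component
    have T00 : pd 0 (fun y : Fin 2 → ℝ => (y 1 + b) ^ 2 *
        (pd 0 (fun w => κ / 2 * (1 - 2 * (w 1 + b) / (β * b ^ 3) - 1 / (β * (w 1 + b) ^ 2))) y +
         pd 0 (fun w => κ / 2 * (1 - 2 * (w 1 + b) / (β * b ^ 3) - 1 / (β * (w 1 + b) ^ 2))) y)) z
        = 0 := by
      rw [pd_congr (g := fun _ => (0:ℝ)) ?_ 0, pd_const]
      filter_upwards [hS] with y hy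
      rw [P1 y hy]; ring
    have T01 : pd 1 (fun y : Fin 2 → ℝ => (y 1 + b) ^ 2 *
        (pd 1 (fun w => κ / 2 * (1 - 2 * (w 1 + b) / (β * b ^ 3) - 1 / (β * (w 1 + b) ^ 2))) y +
         pd 0 (fun w => (0:ℝ)) y)) z
        = -(2 * κ * (z 1 + b) / (β * b ^ 3)) - κ / (β * (z 1 + b) ^ 2) := by
      rw [pd_congr (g := fun y : Fin 2 → ℝ =>
        (y 1 + b) ^ 2 * (κ / 2 * (-(2 / (β * b ^ 3)) + 2 / (β * (y 1 + b) ^ 3)))) ?_ 1]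
      · have := pd_comp 1 1 (hG (z 1) hzb)
        simpa using this
      · filter_upwards [hS] with y hy
        rw [P2 y hy, pd_const]; ring
    rw [T00, T01, P4]
    field_simp
    ring
  · -- second momentum component
    have T10 : pd 0 (fun y : Fin 2 → ℝ => (y 1 + b) ^ 2 *
        (pd 0 (fun w => (0:ℝ)) y +
         pd 1 (fun w => κ / 2 * (1 - 2 * (w 1 + b) / (β * b ^ 3) - 1 / (β * (w 1 + b) ^ 2))) y)) z
        = 0 := by
      rw [pd_congr (g := fun y : Fin 2 → ℝ =>
        (y 1 + b) ^ 2 * (κ / 2 * (-(2 / (β * b ^ 3)) + 2 / (β * (y 1 + b) ^ 3)))) ?_ 0]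
      · have := pd_comp 1 0 (hG (z 1) hzb)
        simpa using this
      · filter_upwards [hS] with y hy
        rw [P2 y hy, pd_const]; ring
    have T11 : pd 1 (fun y : Fin 2 → ℝ => (y 1 + b) ^ 2 *
        (pd 1 (fun w => (0:ℝ)) y + pd 1 (fun w => (0:ℝ)) y)) z = 0 := by
      have he : (fun y : Fin 2 → ℝ => (y 1 + b) ^ 2 *
          (pd 1 (fun w => (0:ℝ)) y + pd 1 (fun w => (0:ℝ)) y)) = fun _ => (0:ℝ) := by
        funext y; rw [pd_const]; ring
      rw [he, pd_const]
    rw [T10, T11, P5]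
    ring
  · -- divergence free
    rw [P1 z hzb, pd_const]
    ring
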